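/- arXiv:2008.03279 — 4 statements merged into one kernel-verified Lean document; each statement's English description precedes it below -/
import Mathlib

section
/- Let R₁, R₂, S₁, S₂ be finite digraphs with R₁ ⊑_Γ S₁ and R₂ ⊑_Γ S₂, both with respect to the class of all finite digraphs. Then R₁ + R₂ ⊑_Γ S₁ + S₂ with respect to the class of all finite digraphs, where + denotes the direct (disjoint) sum of digraphs. -/
/-- A homomorphism between digraphs `(V, A)` and `(W, B)`:
a map sending every arc to an arc. -/
def IsHom {V W : Type} (A : V → V → Prop) (B : W → W → Prop) (f : V → W) : Prop :=
  ∀ ⦃v w : V⦄, A v w → B (f v) (f w)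

/-- A strict homomorphism: a homomorphism mapping proper arcs to proper arcs. -/
def IsStrictHom {V W : Type} (A : V → V → Prop) (B : W → W → Prop) (f : V → W) : Prop :=
  IsHom A B f ∧ ∀ ⦃v w : V⦄, A v w → v ≠ w → f v ≠ f w

/-- Adjacency in a digraph. -/
def DAdj {V : Type} (A : V → V → Prop) (v w : V) : Prop := A v w ∨ A w v

/-- `v` and `w` are connected in `X`: `v = w` (with `v ∈ X`), or there is a line
`z 0, …, z I` inside `X` connecting them, consecutive members being adjacent. -/
def ConnIn {V : Type} (A : V → V → Prop) (X : Set V) (v w : V) : Prop :=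
  ∃ (I : ℕ) (z : ℕ → V), z 0 = v ∧ z I = w ∧ (∀ i ≤ I, z i ∈ X) ∧
    ∀ i < I, DAdj A (z i) (z (i + 1))

/-- `γ_X(v)`: the set of `w ∈ X` connected with `v` in `X`. -/
def gammaSet {V : Type} (A : V → V → Prop) (X : Set V) (v : V) : Set V :=
  {w | ConnIn A X v w}

/-- `Γ_ξ(v)`: the connectivity component of `v` in the preimage `ξ⁻¹(ξ(v))`. -/
def GammaComp {V W : Type} (A : V → V → Prop) (ξ : V → W) (v : V) : Set V :=
  gammaSet A {u | ξ u = ξ v} v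

/-- The set of homomorphisms `H(G,H)` (as a type). -/
def HomSet {V W : Type} (A : V → V → Prop) (B : W → W → Prop) : Type :=
  {f : V → W // IsHom A B f}

/-- The set of strict homomorphisms `S(G,H)` (as a type). -/
def StrictHomSet {V W : Type} (A : V → V → Prop) (B : W → W → Prop) : Type :=
  {f : V → W // IsStrictHom A B f}

/-- The vertex set of the digraph `G_ξ`: the components `Γ_ξ(v)`, `v ∈ V(G)`. -/
def GVert {V W : Type} (A : V → V → Prop) (ξ : V → W) : Type :=
  {C : Set V // ∃ v, C = GammaComp A ξ v}

/-- The arc relation of the digraph `G_ξ`. -/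
def GArc {V W : Type} (A : V → V → Prop) (ξ : V → W) :
    GVert A ξ → GVert A ξ → Prop :=
  fun C D => ∃ a ∈ C.1, ∃ b ∈ D.1, A a b

/-- The canonical map `π_ξ : G → G_ξ`, `v ↦ Γ_ξ(v)`. -/
def piMap {V W : Type} (A : V → V → Prop) (ξ : V → W) (v : V) : GVert A ξ :=
  ⟨GammaComp A ξ v, v, rfl⟩

/-- `Θ_{G,H'}(ξ)`: the homomorphisms `ζ : G → H'` with `G_ζ = G_ξ`
(equality of the digraphs `G_ζ` and `G_ξ`, i.e. of their vertex sets,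
which determines the arc sets). -/
def ThetaSet {V W W' : Type} (A : V → V → Prop) (B' : W' → W' → Prop)
    (ξ : V → W) : Set (V → W') :=
  {ζ | IsHom A B' ζ ∧
    {C : Set V | ∃ v, C = GammaComp A ζ v} = {C : Set V | ∃ v, C = GammaComp A ξ v}}

/-- `R ⊑_Γ S` with respect to a class `D'` of finite digraphs: a strong Γ-scheme
from `R` to `S` exists, i.e. for every finite digraph `G ∈ D'` an injective map
`ρ_G : H(G,R) → H(G,S)` with `Γ_{ρ_G(ξ)}(v) = Γ_ξ(v)` for all `ξ`, `v`. -/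
def SqGamma (D' : (V : Type) → (V → V → Prop) → Prop)
    {VR VS : Type} (R : VR → VR → Prop) (S : VS → VS → Prop) : Prop :=
  ∀ (V : Type) [Finite V] [Nonempty V] (A : V → V → Prop), D' V A →
    ∃ ρ : HomSet A R → HomSet A S, Function.Injective ρ ∧
      ∀ (ξ : HomSet A R) (v : V), GammaComp A (ρ ξ).1 v = GammaComp A ξ.1 v

/-- The class `T_a`: digraphs whose loop-removed digraph is acyclic,
i.e. every closed walk is trivial. -/
def Ta {V : Type} (A : V → V → Prop) : Prop :=
  ∀ (z : ℕ → V) (I : ℕ), 0 < I →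
    (∀ i < I, A (z i) (z (i + 1)) ∧ z i ≠ z (i + 1)) → z 0 ≠ z I

/-- A poset: a reflexive, antisymmetric, transitive digraph. -/
def IsPosetRel {V : Type} (A : V → V → Prop) : Prop :=
  Reflexive A ∧ AntiSymmetric A ∧ Transitive A

/-- An element of `P^*`: an irreflexive, antisymmetric, transitive digraph. -/
def IsStrictPosetRel {V : Type} (A : V → V → Prop) : Prop :=
  Irreflexive A ∧ AntiSymmetric A ∧ Transitive A

/-- The direct (disjoint) sum of two digraphs. -/
def sumRel {V W : Type} (A : V → V → Prop) (B : W → W → Prop) :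
    V ⊕ W → V ⊕ W → Prop
  | Sum.inl v, Sum.inl w => A v w
  | Sum.inr v, Sum.inr w => B v w
  | _, _ => False

/-- The open neighborhood `N(v)`. -/
def Nbr {Z : Type} (A : Z → Z → Prop) (v : Z) : Set Z :=
  {w | w ≠ v ∧ (A v w ∨ A w v)}

/-- The in-neighborhood `N^in(v)`. -/
def NIn {Z : Type} (A : Z → Z → Prop) (v : Z) : Set Z :=
  {w | w ≠ v ∧ A w v}

/-- The out-neighborhood `N^out(v)`. -/
def NOut {Z : Type} (A : Z → Z → Prop) (v : Z) : Set Z :=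
  {w | w ≠ v ∧ A v w}

/-- `A_r`: the arcs of `R` minus all arcs between `M` and `X`. -/
def ArRel {Z : Type} (A : Z → Z → Prop) (X M : Set Z) : Z → Z → Prop :=
  fun v w => A v w ∧ ¬(v ∈ M ∧ w ∈ X) ∧ ¬(v ∈ X ∧ w ∈ M)

/-- `A_d = { m β(x) : m x ∈ A(R) ∩ (M × X) }`. -/
def AdRel {Z : Type} (A : Z → Z → Prop) (X M : Set Z) (β : Z → Z) : Z → Z → Prop :=
  fun v w => v ∈ M ∧ ∃ x ∈ X, A v x ∧ w = β x

/-- `A_u = { β(x) m : x m ∈ A(R) ∩ (X × M) }`. -/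
def AuRel {Z : Type} (A : Z → Z → Prop) (X M : Set Z) (β : Z → Z) : Z → Z → Prop :=
  fun v w => w ∈ M ∧ ∃ x ∈ X, A x w ∧ v = β x

/-- The rearranged digraph `S`, with `A(S) = A_r ∪ A_d ∪ A_u`. -/
def SRel {Z : Type} (A : Z → Z → Prop) (X M : Set Z) (β : Z → Z) : Z → Z → Prop :=
  fun v w => ArRel A X M v w ∨ AdRel A X M β v w ∨ AuRel A X M β v w

/-- `U_ξ = { v : ξ(v) ∈ T and ξ[N_G(v)] ∩ M ≠ ∅ }` (for `T = X`; with `T = Y`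
this gives `U'_ζ`). -/
def USet {V Z : Type} (AG : V → V → Prop) (T M : Set Z) (ξ : V → Z) : Set V :=
  {v | ξ v ∈ T ∧ ∃ w ∈ Nbr AG v, ξ w ∈ M}

open Classical in
/-- The rearranged homomorphism `ρ_G(ξ)`: `β(ξ(v))` on `U_ξ` and `ξ(v)` elsewhere. -/
noncomputable def rhoMap {V Z : Type} (AG : V → V → Prop) (X M : Set Z) (β : Z → Z)
    (ξ : V → Z) : V → Z :=
  fun v => if v ∈ USet AG X M ξ then β (ξ v) else ξ v

/-
A homomorphism `ξ : G → R₁ + R₂` splits `V(G)` into `P = ξ⁻¹(R₁)` and its complement, with no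
arcs between the two, and restricts to homomorphisms `G[P] → R₁` and `G[Pᶜ] → R₂`. Applying the
given schemes to these induced subgraphs and gluing the results gives `G → S₁ + S₂`. The glued
map lands in `S₁` exactly on `P`, so it determines `P` and both pieces, whence injectivity. Every
fibre of a glued map lies on one side, where connectivity in `G` is connectivity in the induced
subgraph, so the Γ-components are those of the pieces.
-/

def inducedRel {V : Type} (A : V → V → Prop) (P : Set V) : P → P → Prop :=
  fun a b => A a b

section Connectivity

variable {V : Type} (A : V → V → Prop)

lemma ConnIn.mem_right {X : Set V} {v w : V} (h : ConnIn A X v w) : w ∈ X := by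
  obtain ⟨I, z, -, rfl, hmem, -⟩ := h
  exact hmem I le_rfl

lemma connIn_inducedRel_iff {P X : Set V} (hX : X ⊆ P) {v w : V} (hv : v ∈ P) (hw : w ∈ P) :
    ConnIn (inducedRel A P) (Subtype.val ⁻¹' X) ⟨v, hv⟩ ⟨w, hw⟩ ↔ ConnIn A X v w := by
  constructor
  · rintro ⟨I, z, hz0, hzI, hmem, hadj⟩
    exact ⟨I, fun i => (z i).1, congrArg Subtype.val hz0, congrArg Subtype.val hzI, hmem, hadj⟩
  · rintro ⟨I, z, rfl, rfl, hmem, hadj⟩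
    refine ⟨I, fun i => ⟨z (min i I), hX (hmem _ (min_le_right i I))⟩,
      Subtype.ext (by simp), Subtype.ext (by simp), fun i _ => hmem _ (min_le_right i I),
      fun i hi => ?_⟩
    show DAdj A (z (min i I)) (z (min (i + 1) I))
    rw [min_eq_left hi.le, min_eq_left hi]
    exact hadj i hi

lemma gammaComp_eq_image_val {W : Type} (ζ : V → W) {P : Set V} {v : V} (hv : v ∈ P)
    (hP : ∀ u, ζ u = ζ v → u ∈ P) :
    GammaComp A ζ v = Subtype.val '' GammaComp (inducedRel A P) (ζ ∘ Subtype.val) ⟨v, hv⟩ := by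
  ext w
  constructor
  · intro hw
    have hwP : w ∈ P := hP w (ConnIn.mem_right A hw)
    exact ⟨⟨w, hwP⟩, (connIn_inducedRel_iff A hP hv hwP).2 hw, rfl⟩
  · rintro ⟨⟨w, hwP⟩, hw, rfl⟩
    exact (connIn_inducedRel_iff A hP hv hwP).1 hw

lemma gammaComp_comp_of_injective {W W' : Type} {e : W → W'} (he : Function.Injective e)
    (ζ : V → W) (v : V) : GammaComp A (e ∘ ζ) v = GammaComp A ζ v := by
  simp only [GammaComp, Function.comp_apply, he.eq_iff]

end Connectivity

section Glue

variable {V α β : Type} {P : Set V} {f : P → α} {g : ↥Pᶜ → β} {v : V}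

open Classical in
noncomputable def glue (P : Set V) (f : P → α) (g : ↥Pᶜ → β) : V → α ⊕ β :=
  fun v => if h : v ∈ P then .inl (f ⟨v, h⟩) else .inr (g ⟨v, h⟩)

lemma glue_of_mem (h : v ∈ P) : glue P f g v = .inl (f ⟨v, h⟩) := dif_pos h

lemma glue_of_not_mem (h : v ∉ P) : glue P f g v = .inr (g ⟨v, h⟩) := dif_neg h

lemma isLeft_glue_iff : (glue P f g v).isLeft ↔ v ∈ P := by
  by_cases h : v ∈ P <;> simp [glue_of_mem, glue_of_not_mem, h]

lemma glue_comp_val : glue P f g ∘ (Subtype.val : P → V) = Sum.inl ∘ f :=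
  funext fun a => glue_of_mem a.2

lemma glue_comp_val_compl : glue P f g ∘ (Subtype.val : ↥Pᶜ → V) = Sum.inr ∘ g :=
  funext fun a => glue_of_not_mem a.2

lemma glue_sigma_injective :
    Function.Injective fun x : Σ P : Set V, (P → α) × (↥Pᶜ → β) => glue x.1 x.2.1 x.2.2 := by
  rintro ⟨P, f, g⟩ ⟨P', f', g'⟩ (h : glue P f g = glue P' f' g')
  obtain rfl : P = P' := Set.ext fun v => by
    rw [← isLeft_glue_iff (f := f) (g := g), ← isLeft_glue_iff (f := f') (g := g'), h]
  have hf : f = f' := Sum.inl_injective.comp_left <| show Sum.inl ∘ f = Sum.inl ∘ f' by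
    rw [← glue_comp_val (g := g), ← glue_comp_val (g := g'), h]
  have hg : g = g' := Sum.inr_injective.comp_left <| show Sum.inr ∘ g = Sum.inr ∘ g' by
    rw [← glue_comp_val_compl (f := f), ← glue_comp_val_compl (f := f'), h]
  rw [hf, hg]

lemma isHom_glue {W1 W2 : Type} {A : V → V → Prop} {S1 : W1 → W1 → Prop}
    {S2 : W2 → W2 → Prop} {f : P → W1} {g : ↥Pᶜ → W2}
    (hP : ∀ ⦃u w⦄, A u w → (u ∈ P ↔ w ∈ P))
    (hf : IsHom (inducedRel A P) S1 f) (hg : IsHom (inducedRel A Pᶜ) S2 g) :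
    IsHom A (sumRel S1 S2) (glue P f g) := by
  intro u w huw
  by_cases hu : u ∈ P
  · have hw : w ∈ P := (hP huw).1 hu
    rw [glue_of_mem hu, glue_of_mem hw]
    exact hf (v := ⟨u, hu⟩) (w := ⟨w, hw⟩) huw
  · have hw : w ∉ P := fun hw => hu ((hP huw).2 hw)
    rw [glue_of_not_mem hu, glue_of_not_mem hw]
    exact hg (v := ⟨u, hu⟩) (w := ⟨w, hw⟩) huw

variable (A : V → V → Prop)

lemma gammaComp_glue_of_mem (h : v ∈ P) :
    GammaComp A (glue P f g) v = Subtype.val '' GammaComp (inducedRel A P) f ⟨v, h⟩ := by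
  have hfibre : ∀ u, glue P f g u = glue P f g v → u ∈ P := fun u hu =>
    isLeft_glue_iff.1 (hu ▸ isLeft_glue_iff.2 h)
  rw [gammaComp_eq_image_val A _ h hfibre, glue_comp_val,
    gammaComp_comp_of_injective _ Sum.inl_injective]

lemma gammaComp_glue_of_not_mem (h : v ∉ P) :
    GammaComp A (glue P f g) v = Subtype.val '' GammaComp (inducedRel A Pᶜ) g ⟨v, h⟩ := by
  have hfibre : ∀ u, glue P f g u = glue P f g v → u ∈ Pᶜ := fun u hu =>
    mt isLeft_glue_iff.2 (hu ▸ mt isLeft_glue_iff.1 h)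
  rw [gammaComp_eq_image_val A _ h hfibre, glue_comp_val_compl,
    gammaComp_comp_of_injective _ Sum.inr_injective]

end Glue

section SumRel

variable {V V1 V2 : Type} {R1 : V1 → V1 → Prop} {R2 : V2 → V2 → Prop}

lemma sumRel_getLeft : ∀ {s t : V1 ⊕ V2}, sumRel R1 R2 s t → ∀ (hs : s.isLeft) (ht : t.isLeft),
    R1 (s.getLeft hs) (t.getLeft ht)
  | .inl _, .inl _, h, _, _ => h

lemma sumRel_getRight : ∀ {s t : V1 ⊕ V2}, sumRel R1 R2 s t →
    ∀ (hs : s.isRight) (ht : t.isRight), R2 (s.getRight hs) (t.getRight ht)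
  | .inr _, .inr _, h, _, _ => h

lemma sumRel.isLeft_eq : ∀ {s t : V1 ⊕ V2}, sumRel R1 R2 s t → s.isLeft = t.isLeft
  | .inl _, .inl _, _ => rfl
  | .inr _, .inr _, _ => rfl

def leftPart {α β : Type} (ξ : V → α ⊕ β) : Set V := {v | (ξ v).isLeft}

variable {A : V → V → Prop}

lemma mem_leftPart_iff_of_isHom {ξ : V → V1 ⊕ V2} (hξ : IsHom A (sumRel R1 R2) ξ) {u w : V}
    (huw : A u w) : u ∈ leftPart ξ ↔ w ∈ leftPart ξ := by
  show (ξ u).isLeft = true ↔ (ξ w).isLeft = true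
  rw [(hξ huw).isLeft_eq]

def homLeft (ξ : HomSet A (sumRel R1 R2)) : HomSet (inducedRel A (leftPart ξ.1)) R1 :=
  ⟨fun a => (ξ.1 a).getLeft a.2, fun _ _ hab => sumRel_getLeft (ξ.2 hab) _ _⟩

def homRight (ξ : HomSet A (sumRel R1 R2)) : HomSet (inducedRel A (leftPart ξ.1)ᶜ) R2 :=
  ⟨fun a => (ξ.1 a).getRight (Sum.not_isLeft.1 a.2),
    fun _ _ hab => sumRel_getRight (ξ.2 hab) _ _⟩

lemma glue_homLeft_homRight (ξ : HomSet A (sumRel R1 R2)) :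
    glue (leftPart ξ.1) (homLeft ξ).1 (homRight ξ).1 = ξ.1 := by
  funext v
  by_cases h : v ∈ leftPart ξ.1
  · rw [glue_of_mem h]
    exact Sum.inl_getLeft _ _
  · rw [glue_of_not_mem h]
    exact Sum.inr_getRight _ _

variable (A R1 R2) in
def splitHom (ξ : HomSet A (sumRel R1 R2)) :
    Σ P : Set V, HomSet (inducedRel A P) R1 × HomSet (inducedRel A Pᶜ) R2 :=
  ⟨leftPart ξ.1, homLeft ξ, homRight ξ⟩

lemma splitHom_injective : Function.Injective (splitHom A R1 R2) := fun ξ ξ' h =>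
  Subtype.ext <| calc
    ξ.1 = glue (leftPart ξ.1) (homLeft ξ).1 (homRight ξ).1 := (glue_homLeft_homRight ξ).symm
    _ = glue (leftPart ξ'.1) (homLeft ξ').1 (homRight ξ').1 :=
      congrArg (fun x => glue x.1 x.2.1.1 x.2.2.1) h
    _ = ξ'.1 := glue_homLeft_homRight ξ'

end SumRel

section SumScheme

variable {V V1 V2 W1 W2 : Type} (A : V → V → Prop) {R1 : V1 → V1 → Prop}
  {R2 : V2 → V2 → Prop} {S1 : W1 → W1 → Prop} {S2 : W2 → W2 → Prop}
  (ρ1 : ∀ P : Set V, HomSet (inducedRel A P) R1 → HomSet (inducedRel A P) S1)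
  (ρ2 : ∀ P : Set V, HomSet (inducedRel A P) R2 → HomSet (inducedRel A P) S2)

noncomputable def sumScheme (ξ : HomSet A (sumRel R1 R2)) : HomSet A (sumRel S1 S2) :=
  ⟨glue (leftPart ξ.1) (ρ1 _ (homLeft ξ)).1 (ρ2 _ (homRight ξ)).1,
    isHom_glue (fun _ _ => mem_leftPart_iff_of_isHom ξ.2) (ρ1 _ _).2 (ρ2 _ _).2⟩

lemma coe_sumScheme (ξ : HomSet A (sumRel R1 R2)) :
    (sumScheme A ρ1 ρ2 ξ).1 = glue (leftPart ξ.1) (ρ1 _ (homLeft ξ)).1 (ρ2 _ (homRight ξ)).1 :=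
  rfl

variable {A ρ1 ρ2}

lemma sumScheme_injective (h1 : ∀ P, Function.Injective (ρ1 P))
    (h2 : ∀ P, Function.Injective (ρ2 P)) : Function.Injective (sumScheme A ρ1 ρ2) := by
  let forget : (Σ P : Set V, HomSet (inducedRel A P) R1 × HomSet (inducedRel A Pᶜ) R2) →
      Σ P : Set V, (P → W1) × (↥Pᶜ → W2) :=
    Sigma.map id fun P x => ((ρ1 P x.1).1, (ρ2 Pᶜ x.2).1)
  have hforget : Function.Injective forget := Function.injective_id.sigma_map fun P =>
    (Subtype.val_injective.comp (h1 P)).prodMap (Subtype.val_injective.comp (h2 Pᶜ))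
  intro ξ ξ' h
  exact splitHom_injective (hforget (glue_sigma_injective (congrArg Subtype.val h)))

lemma gammaComp_sumScheme
    (h1 : ∀ P η a, GammaComp (inducedRel A P) (ρ1 P η).1 a = GammaComp (inducedRel A P) η.1 a)
    (h2 : ∀ P η a, GammaComp (inducedRel A P) (ρ2 P η).1 a = GammaComp (inducedRel A P) η.1 a)
    (ξ : HomSet A (sumRel R1 R2)) (v : V) :
    GammaComp A (sumScheme A ρ1 ρ2 ξ).1 v = GammaComp A ξ.1 v := by
  conv_rhs => rw [← glue_homLeft_homRight ξ]
  rw [coe_sumScheme]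
  by_cases h : v ∈ leftPart ξ.1
  · rw [gammaComp_glue_of_mem A h, gammaComp_glue_of_mem A h, h1]
  · rw [gammaComp_glue_of_not_mem A h, gammaComp_glue_of_not_mem A h, h2]

end SumScheme

-- `SqGamma` only speaks about nonempty graphs, whereas the induced pieces `G[P]` may be empty.
lemma SqGamma.exists_scheme {VR VS : Type} {R : VR → VR → Prop} {S : VS → VS → Prop}
    (h : SqGamma (fun _ _ => True) R S) (U : Type) [Finite U] (A : U → U → Prop) :
    ∃ ρ : HomSet A R → HomSet A S, Function.Injective ρ ∧
      ∀ (ξ : HomSet A R) (v : U), GammaComp A (ρ ξ).1 v = GammaComp A ξ.1 v := by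
  cases isEmpty_or_nonempty U
  · exact ⟨fun _ => ⟨isEmptyElim, fun v => isEmptyElim v⟩,
      fun _ _ _ => Subtype.ext (funext isEmptyElim), fun _ v => isEmptyElim v⟩
  · exact h U A trivial

theorem stmt15_general {V1 V2 W1 W2 : Type}
    (R1 : V1 → V1 → Prop) (R2 : V2 → V2 → Prop)
    (S1 : W1 → W1 → Prop) (S2 : W2 → W2 → Prop)
    (h1 : SqGamma (fun _ _ => True) R1 S1)
    (h2 : SqGamma (fun _ _ => True) R2 S2) :
    SqGamma (fun _ _ => True) (sumRel R1 R2) (sumRel S1 S2) := by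
  intro V _ _ A _
  choose ρ1 hρ1 hΓ1 using fun P : Set V => h1.exists_scheme P (inducedRel A P)
  choose ρ2 hρ2 hΓ2 using fun P : Set V => h2.exists_scheme P (inducedRel A P)
  exact ⟨sumScheme A ρ1 ρ2, sumScheme_injective hρ1 hρ2, gammaComp_sumScheme hΓ1 hΓ2⟩

/-- If `R₁ ⊑_Γ S₁` and `R₂ ⊑_Γ S₂` with respect to the class of all finite
digraphs, then `R₁ + R₂ ⊑_Γ S₁ + S₂` with respect to that class, `+` being the
direct (disjoint) sum. -/
theorem stmt15 {V1 V2 W1 W2 : Type}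
    [Finite V1] [Nonempty V1] [Finite V2] [Nonempty V2]
    [Finite W1] [Nonempty W1] [Finite W2] [Nonempty W2]
    (R1 : V1 → V1 → Prop) (R2 : V2 → V2 → Prop)
    (S1 : W1 → W1 → Prop) (S2 : W2 → W2 → Prop)
    (h1 : SqGamma (fun _ _ => True) R1 S1)
    (h2 : SqGamma (fun _ _ => True) R2 S2) :
    SqGamma (fun _ _ => True) (sumRel R1 R2) (sumRel S1 S2) :=
  stmt15_general R1 R2 S1 S2 h1 h2
end

section
/- Assume the rearrangement setup and additionally that β is a bijective homomorphism from R|_X to R|_Y and that for all x ∈ X, N^in_R(x) \ M ⊆ N^in_R(β(x)) and N^out_R(x) \ M ⊆ N^out_R(β(x)). For every finite digraph G and every ξ ∈ S(G,R), define ρ_G(ξ) : V(G) → Z by ρ_G(ξ)(v) = β(ξ(v)) if v ∈ U_ξ and ρ_G(ξ)(v) = ξ(v) otherwise. Then ρ_G(ξ) ∈ S(G,S); moreover the inversion formula ξ(v) = β⁻¹(ρ_G(ξ)(v)) for v ∈ U'_{ρ_G(ξ)} and ξ(v) = ρ_G(ξ)(v) otherwise holds, so ρ_G : S(G,R) → S(G,S)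 is injective; and consequently R ⊑_Γ S with respect to the class of all finite digraphs. -/
/-!
On the classes `Γ_ξ(v)` over `X` that touch a vertex mapped into `M`, the map `satRhoMap`
replaces `ξ` by `β ∘ ξ`. The neighbourhood conditions on `β` show that along an arc of `G`
the new map identifies the endpoints iff `ξ` does, so the classes `Γ` are unchanged, and the
arcs between `X` and `M` are redirected exactly as in `A_d` and `A_u`, so it is a
homomorphism into `S`. Since no vertex of `Y` is adjacent to `M`, the set where `ξ` was
changed is recovered from the new map as the same saturated set over `Y`, which inverts the
construction. For strict `ξ` the classes are singletons and the construction is `ρ_G(ξ)`.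
-/

namespace GammaComp

variable {V W W' : Type} {AG : V → V → Prop} {ξ : V → W}

def FiberAdj (AG : V → V → Prop) (ξ : V → W) (a b : V) : Prop :=
  DAdj AG a b ∧ ξ a = ξ b

instance : Std.Symm (FiberAdj AG ξ) :=
  ⟨fun _ _ ⟨h, he⟩ => ⟨h.symm, he.symm⟩⟩

lemma mem_iff {v w : V} :
    w ∈ GammaComp AG ξ v ↔ Relation.ReflTransGen (FiberAdj AG ξ) v w := by
  constructor
  · rintro ⟨I, z, rfl, rfl, hX, hadj⟩
    suffices ∀ i ≤ I, Relation.ReflTransGen (FiberAdj AG ξ) (z 0) (z i) from this I le_rfl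
    intro i
    induction i with
    | zero => exact fun _ => .refl
    | succ i ih => exact fun hi =>
        (ih (by omega)).tail ⟨hadj i hi, (hX i (by omega)).trans (hX (i + 1) hi).symm⟩
  · intro h
    induction h with
    | refl =>
      exact ⟨0, fun _ => v, rfl, rfl, fun _ _ => rfl, fun _ h => absurd h (Nat.not_lt_zero _)⟩
    | @tail b c _ hbc ih =>
      obtain ⟨I, z, h0, hI, hX, hadj⟩ := ih
      refine ⟨I + 1, fun i => if i ≤ I then z i else c, by simpa using h0, by simp, ?_, ?_⟩
      · intro i hi
        dsimp only
        split_ifs with h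
        · exact hX i h
        · exact hbc.2.symm.trans (hI ▸ hX I le_rfl)
      · intro i hi
        rcases Nat.lt_or_ge i I with h | h
        · simpa [h.le, Nat.succ_le_of_lt h] using hadj i h
        · obtain rfl : i = I := by omega
          simpa [hI] using hbc.1

lemma mem_self (v : V) : v ∈ GammaComp AG ξ v :=
  mem_iff.2 .refl

lemma apply_eq_of_mem {u v : V} (h : u ∈ GammaComp AG ξ v) : ξ u = ξ v := by
  have := (mem_iff.1 h).lift ξ (p := Eq) fun _ _ hab => hab.2
  rw [Relation.reflTransGen_eq_self] at this
  exact this.symm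

lemma mem_of_dAdj {v w : V} (hadj : DAdj AG v w) (h : ξ v = ξ w) : w ∈ GammaComp AG ξ v :=
  mem_iff.2 (.single ⟨hadj, h⟩)

lemma eq_of_mem {u v : V} (h : u ∈ GammaComp AG ξ v) :
    GammaComp AG ξ u = GammaComp AG ξ v := by
  have hvu := mem_iff.1 h
  ext w
  simp only [mem_iff]
  exact ⟨fun huw => hvu.trans huw, fun hvw => (Std.Symm.symm _ _ hvu).trans hvw⟩

lemma congr {ζ : V → W'} (h : ∀ u w, DAdj AG u w → (ξ u = ξ w ↔ ζ u = ζ w)) (v : V) :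
    GammaComp AG ζ v = GammaComp AG ξ v := by
  have : FiberAdj AG ζ = FiberAdj AG ξ := by
    ext u w
    exact and_congr_right fun hadj => (h u w hadj).symm
  ext w
  simp only [mem_iff, this]

lemma eq_singleton (hξ : ∀ ⦃v w : V⦄, AG v w → v ≠ w → ξ v ≠ ξ w) (v : V) :
    GammaComp AG ξ v = {v} := by
  have hfib : FiberAdj AG ξ ≤ Eq := by
    rintro a b ⟨hadj | hadj, he⟩ <;> by_contra hne
    exacts [hξ hadj hne he, hξ hadj (Ne.symm hne) he.symm]
  ext w
  refine ⟨fun h => ?_, fun h => by rw [Set.mem_singleton_iff.1 h]; exact mem_self v⟩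
  have := Relation.ReflTransGen.mono hfib _ _ (mem_iff.1 h)
  rw [Relation.reflTransGen_eq_self] at this
  exact this.symm

end GammaComp

lemma IsHom.mem_nbr {V Z : Type} {AG : V → V → Prop} {A : Z → Z → Prop} {ξ : V → Z}
    (hξ : IsHom AG A ξ) {v w : V} (hw : w ∈ Nbr AG v) (hne : ξ w ≠ ξ v) :
    ξ w ∈ Nbr A (ξ v) :=
  ⟨hne, hw.2.imp (fun h => hξ h) (fun h => hξ h)⟩

lemma nbr_diff_subset {Z : Type} {A : Z → Z → Prop} {X M : Set Z} {β : Z → Z}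
    (hnbh : ∀ x ∈ X, NIn A x \ M ⊆ NIn A (β x) ∧ NOut A x \ M ⊆ NOut A (β x))
    {x : Z} (hx : x ∈ X) : Nbr A x \ M ⊆ Nbr A (β x) := by
  rintro z ⟨⟨hne, hout | hin⟩, hzM⟩
  · obtain ⟨hne', h⟩ := (hnbh x hx).2 ⟨⟨hne, hout⟩, hzM⟩
    exact ⟨hne', Or.inl h⟩
  · obtain ⟨hne', h⟩ := (hnbh x hx).1 ⟨⟨hne, hin⟩, hzM⟩
    exact ⟨hne', Or.inr h⟩

/-- `U_ξ` saturated along the classes `Γ_ξ(v)`. For strict `ξ` these classes are singletons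
and this is `USet AG X M ξ`; the saturation makes the rearrangement work for every
homomorphism. -/
def satUSet {V Z : Type} (AG : V → V → Prop) (X M : Set Z) (ξ : V → Z) : Set V :=
  {v | ξ v ∈ X ∧ ∃ u ∈ GammaComp AG ξ v, ∃ w ∈ Nbr AG u, ξ w ∈ M}

open Classical in
noncomputable def satRhoMap {V Z : Type} (AG : V → V → Prop) (X M : Set Z) (β : Z → Z)
    (ξ : V → Z) : V → Z :=
  fun v => if v ∈ satUSet AG X M ξ then β (ξ v) else ξ v

section Rearrangement

variable {V Z : Type} {AG : V → V → Prop} {A : Z → Z → Prop} {X M Y : Set Z} {β : Z → Z}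
  {ξ : V → Z}

lemma mem_satUSet_iff_of_mem_gammaComp {u v : V} (h : u ∈ GammaComp AG ξ v) :
    u ∈ satUSet AG X M ξ ↔ v ∈ satUSet AG X M ξ := by
  simp only [satUSet, Set.mem_setOf_eq, GammaComp.apply_eq_of_mem h, GammaComp.eq_of_mem h]

lemma mem_satUSet_of_mem_nbr {v w : V} (hv : ξ v ∈ X) (hw : w ∈ Nbr AG v) (hwM : ξ w ∈ M) :
    v ∈ satUSet AG X M ξ :=
  ⟨hv, v, GammaComp.mem_self v, w, hw, hwM⟩

lemma satUSet_eq_uSet (hξ : ∀ ⦃v w : V⦄, AG v w → v ≠ w → ξ v ≠ ξ w) :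
    satUSet AG X M ξ = USet AG X M ξ := by
  ext v
  simp only [satUSet, USet, Set.mem_setOf_eq, GammaComp.eq_singleton hξ, Set.mem_singleton_iff,
    exists_eq_left]

lemma satRhoMap_of_mem {v : V} (h : v ∈ satUSet AG X M ξ) :
    satRhoMap AG X M β ξ v = β (ξ v) :=
  if_pos h

lemma satRhoMap_of_notMem {v : V} (h : v ∉ satUSet AG X M ξ) :
    satRhoMap AG X M β ξ v = ξ v :=
  if_neg h

lemma rhoMap_eq_satRhoMap (hξ : ∀ ⦃v w : V⦄, AG v w → v ≠ w → ξ v ≠ ξ w) :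
    rhoMap AG X M β ξ = satRhoMap AG X M β ξ := by
  classical
  funext v
  exact if_congr (by rw [satUSet_eq_uSet hξ]) rfl rfl

lemma satRhoMap_ne_of_mem_of_notMem (hMY : Disjoint M Y) (hβ : Set.MapsTo β X Y)
    (hnbh : ∀ x ∈ X, NIn A x \ M ⊆ NIn A (β x) ∧ NOut A x \ M ⊆ NOut A (β x))
    (hξ : IsHom AG A ξ) {u w : V} (hadj : DAdj AG u w)
    (hu : u ∈ satUSet AG X M ξ) (hw : w ∉ satUSet AG X M ξ) :
    satRhoMap AG X M β ξ u ≠ satRhoMap AG X M β ξ w := by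
  rw [satRhoMap_of_mem hu, satRhoMap_of_notMem hw]
  by_cases he : ξ u = ξ w
  · exact absurd ((mem_satUSet_iff_of_mem_gammaComp (GammaComp.mem_of_dAdj hadj he)).2 hu) hw
  by_cases hwM : ξ w ∈ M
  · exact fun h => hMY.notMem_of_mem_left hwM (h ▸ hβ hu.1)
  have hnbr : ξ w ∈ Nbr A (ξ u) := hξ.mem_nbr ⟨fun h => he (h ▸ rfl), hadj⟩ (Ne.symm he)
  exact fun h => (nbr_diff_subset hnbh hu.1 ⟨hnbr, hwM⟩).1 h.symm

section Hypotheses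

variable (hXM : Disjoint X M) (hMY : Disjoint M Y) (hMNY : ∀ y ∈ Y, M ∩ Nbr A y = ∅)
  (hβ : Set.MapsTo β X Y) (hβinj : Set.InjOn β X)
  (hβhom : ∀ x ∈ X, ∀ x' ∈ X, A x x' → A (β x) (β x'))
  (hnbh : ∀ x ∈ X, NIn A x \ M ⊆ NIn A (β x) ∧ NOut A x \ M ⊆ NOut A (β x))

include hMY hβ hβinj hnbh in
lemma satRhoMap_eq_iff (hξ : IsHom AG A ξ) {u w : V} (hadj : DAdj AG u w) :
    satRhoMap AG X M β ξ u = satRhoMap AG X M β ξ w ↔ ξ u = ξ w := by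
  by_cases hu : u ∈ satUSet AG X M ξ <;> by_cases hw : w ∈ satUSet AG X M ξ
  · rw [satRhoMap_of_mem hu, satRhoMap_of_mem hw]
    exact hβinj.eq_iff hu.1 hw.1
  · refine iff_of_false (satRhoMap_ne_of_mem_of_notMem hMY hβ hnbh hξ hadj hu hw) fun he => ?_
    exact hw ((mem_satUSet_iff_of_mem_gammaComp (GammaComp.mem_of_dAdj hadj he)).2 hu)
  · refine iff_of_false (satRhoMap_ne_of_mem_of_notMem hMY hβ hnbh hξ hadj.symm hw hu).symm
      fun he => ?_
    exact hu ((mem_satUSet_iff_of_mem_gammaComp (GammaComp.mem_of_dAdj hadj.symm he.symm)).2 hw)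
  · rw [satRhoMap_of_notMem hu, satRhoMap_of_notMem hw]

include hMY hβ hβinj hnbh in
lemma gammaComp_satRhoMap (hξ : IsHom AG A ξ) (v : V) :
    GammaComp AG (satRhoMap AG X M β ξ) v = GammaComp AG ξ v :=
  GammaComp.congr (fun _ _ hadj => (satRhoMap_eq_iff hMY hβ hβinj hnbh hξ hadj).symm) v

include hXM hMY hβ hβhom hnbh in
lemma satRhoMap_isHom (hξ : IsHom AG A ξ) :
    IsHom AG (SRel A X M β) (satRhoMap AG X M β ξ) := by
  intro v w hvw
  have hA : A (ξ v) (ξ w) := hξ hvw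
  have same_class (he : ξ v = ξ w) : v ∈ satUSet AG X M ξ ↔ w ∈ satUSet AG X M ξ :=
    (mem_satUSet_iff_of_mem_gammaComp (GammaComp.mem_of_dAdj (Or.inl hvw) he)).symm
  by_cases hv : v ∈ satUSet AG X M ξ <;> by_cases hw : w ∈ satUSet AG X M ξ
  · rw [satRhoMap_of_mem hv, satRhoMap_of_mem hw]
    exact Or.inl ⟨hβhom _ hv.1 _ hw.1 hA, fun h => hMY.notMem_of_mem_left h.1 (hβ hv.1),
      fun h => hMY.notMem_of_mem_left h.2 (hβ hw.1)⟩
  · rw [satRhoMap_of_mem hv, satRhoMap_of_notMem hw]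
    by_cases hwM : ξ w ∈ M
    · exact Or.inr (Or.inr ⟨hwM, ξ v, hv.1, hA, rfl⟩)
    have hne : ξ v ≠ ξ w := fun he => hw ((same_class he).1 hv)
    exact Or.inl ⟨((hnbh _ hv.1).2 ⟨⟨Ne.symm hne, hA⟩, hwM⟩).2,
      fun h => hMY.notMem_of_mem_left h.1 (hβ hv.1), fun h => hwM h.2⟩
  · rw [satRhoMap_of_notMem hv, satRhoMap_of_mem hw]
    by_cases hvM : ξ v ∈ M
    · exact Or.inr (Or.inl ⟨hvM, ξ w, hw.1, hA, rfl⟩)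
    have hne : ξ v ≠ ξ w := fun he => hv ((same_class he).2 hw)
    exact Or.inl ⟨((hnbh _ hw.1).1 ⟨⟨hne, hA⟩, hvM⟩).2,
      fun h => hvM h.1, fun h => hMY.notMem_of_mem_left h.2 (hβ hw.1)⟩
  · rw [satRhoMap_of_notMem hv, satRhoMap_of_notMem hw]
    refine Or.inl ⟨hA, fun ⟨hvM, hwX⟩ => hw ?_, fun ⟨hvX, hwM⟩ => hv ?_⟩
    · exact mem_satUSet_of_mem_nbr hwX
        ⟨fun h => hXM.notMem_of_mem_left hwX (h ▸ hvM), Or.inr hvw⟩ hvM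
    · exact mem_satUSet_of_mem_nbr hvX
        ⟨fun h => hXM.notMem_of_mem_left hvX (h ▸ hwM), Or.inl hvw⟩ hwM

include hXM hMY hMNY hβ hβinj hnbh in
lemma satUSet_satRhoMap (hξ : IsHom AG A ξ) :
    satUSet AG Y M (satRhoMap AG X M β ξ) = satUSet AG X M ξ := by
  have hΓ := gammaComp_satRhoMap hMY hβ hβinj hnbh hξ
  ext v
  constructor
  · rintro ⟨hvY, u, hu, w, hw, hwM⟩
    by_contra hv
    rw [hΓ] at hu
    rw [satRhoMap_of_notMem hv] at hvY
    have hw' : w ∉ satUSet AG X M ξ := fun h =>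
      hMY.notMem_of_mem_left hwM (satRhoMap_of_mem h ▸ hβ h.1)
    rw [satRhoMap_of_notMem hw'] at hwM
    have huY : ξ u ∈ Y := GammaComp.apply_eq_of_mem hu ▸ hvY
    have hwu : ξ w ∈ Nbr A (ξ u) :=
      hξ.mem_nbr hw fun h => hMY.notMem_of_mem_left hwM (h ▸ huY)
    exact (hMNY _ huY).subset ⟨hwM, hwu⟩
  · intro hv
    have ⟨hvX, u, hu, w, hw, hwM⟩ := hv
    have hw' : w ∉ satUSet AG X M ξ := fun h => hXM.notMem_of_mem_left h.1 hwM
    refine ⟨?_, u, (hΓ v).symm ▸ hu, w, hw, ?_⟩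
    · rw [satRhoMap_of_mem hv]
      exact hβ hvX
    · rwa [satRhoMap_of_notMem hw']

include hXM hMY hMNY hβ hβinj hnbh in
lemma satRhoMap_inversion (hξ : IsHom AG A ξ) (v : V) :
    (v ∈ satUSet AG Y M (satRhoMap AG X M β ξ) →
      ξ v ∈ X ∧ β (ξ v) = satRhoMap AG X M β ξ v) ∧
    (v ∉ satUSet AG Y M (satRhoMap AG X M β ξ) → ξ v = satRhoMap AG X M β ξ v) := by
  rw [satUSet_satRhoMap hXM hMY hMNY hβ hβinj hnbh hξ]
  exact ⟨fun hv => ⟨hv.1, (satRhoMap_of_mem hv).symm⟩,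
    fun hv => (satRhoMap_of_notMem hv).symm⟩

include hXM hMY hMNY hβ hβinj hnbh in
lemma satRhoMap_injOn : Set.InjOn (satRhoMap AG X M β) {ξ | IsHom AG A ξ} := by
  intro ξ hξ ξ' hξ' h
  funext v
  have inv := satRhoMap_inversion hXM hMY hMNY hβ hβinj hnbh hξ v
  have inv' := satRhoMap_inversion hXM hMY hMNY hβ hβinj hnbh hξ' v
  rw [h] at inv
  by_cases hv : v ∈ satUSet AG Y M (satRhoMap AG X M β ξ')
  · exact hβinj (inv.1 hv).1 (inv'.1 hv).1 ((inv.1 hv).2.trans (inv'.1 hv).2.symm)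
  · exact (inv.2 hv).trans (inv'.2 hv).symm

include hXM hMY hβ hβinj hβhom hnbh in
lemma satRhoMap_isStrictHom (hξ : IsStrictHom AG A ξ) :
    IsStrictHom AG (SRel A X M β) (satRhoMap AG X M β ξ) :=
  ⟨satRhoMap_isHom hXM hMY hβ hβhom hnbh hξ.1, fun _ _ hvw hne h =>
    hξ.2 hvw hne ((satRhoMap_eq_iff hMY hβ hβinj hnbh hξ.1 (Or.inl hvw)).1 h)⟩

include hXM hMY hMNY hβ hβinj hβhom hnbh in
lemma sqGamma_sRel (D' : (V : Type) → (V → V → Prop) → Prop) :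
    SqGamma D' A (SRel A X M β) := fun _ _ _ AG _ =>
  ⟨fun ξ => ⟨satRhoMap AG X M β ξ.1, satRhoMap_isHom hXM hMY hβ hβhom hnbh ξ.2⟩,
    fun ξ ξ' h => Subtype.ext <|
      satRhoMap_injOn hXM hMY hMNY hβ hβinj hnbh ξ.2 ξ'.2 (congrArg Subtype.val h),
    fun ξ v => gammaComp_satRhoMap hMY hβ hβinj hnbh ξ.2 v⟩

end Hypotheses

end Rearrangement

theorem stmt16_general {Z : Type}
    (A : Z → Z → Prop) (X M Y : Set Z) (β : Z → Z)
    (hXM : X ∩ M = ∅) (hMY : M ∩ Y = ∅)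
    (hMNY : ∀ y ∈ Y, M ∩ Nbr A y = ∅)
    (hbij : Set.BijOn β X Y)
    (hβhom : ∀ x ∈ X, ∀ x' ∈ X, A x x' → A (β x) (β x'))
    (hnbh : ∀ x ∈ X, NIn A x \ M ⊆ NIn A (β x) ∧ NOut A x \ M ⊆ NOut A (β x)) :
    (∀ (V : Type) [Finite V] [Nonempty V] (AG : V → V → Prop) (ξ : V → Z),
      IsStrictHom AG A ξ →
        IsStrictHom AG (SRel A X M β) (rhoMap AG X M β ξ) ∧
        ∀ v : V,
          (v ∈ USet AG Y M (rhoMap AG X M β ξ) →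
            ξ v ∈ X ∧ β (ξ v) = rhoMap AG X M β ξ v) ∧
          (v ∉ USet AG Y M (rhoMap AG X M β ξ) →
            ξ v = rhoMap AG X M β ξ v)) ∧
    (∀ (V : Type) [Finite V] [Nonempty V] (AG : V → V → Prop) (ξ ξ' : V → Z),
      IsStrictHom AG A ξ → IsStrictHom AG A ξ' →
        rhoMap AG X M β ξ = rhoMap AG X M β ξ' → ξ = ξ') ∧
    SqGamma (fun _ _ => True) A (SRel A X M β) := by
  have hXM' : Disjoint X M := Set.disjoint_iff_inter_eq_empty.2 hXM
  have hMY' : Disjoint M Y := Set.disjoint_iff_inter_eq_empty.2 hMY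
  refine ⟨fun V _ _ AG ξ hξ => ?_, fun V _ _ AG ξ ξ' hξ hξ' h => ?_,
    sqGamma_sRel hXM' hMY' hMNY hbij.mapsTo hbij.injOn hβhom hnbh _⟩
  · have hρ := satRhoMap_isStrictHom hXM' hMY' hbij.mapsTo hbij.injOn hβhom hnbh hξ
    rw [rhoMap_eq_satRhoMap hξ.2, ← satUSet_eq_uSet hρ.2]
    exact ⟨hρ, satRhoMap_inversion hXM' hMY' hMNY hbij.mapsTo hbij.injOn hnbh hξ.1⟩
  · rw [rhoMap_eq_satRhoMap hξ.2, rhoMap_eq_satRhoMap hξ'.2] at h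
    exact satRhoMap_injOn hXM' hMY' hMNY hbij.mapsTo hbij.injOn hnbh hξ.1 hξ'.1 h

/-- The rearrangement theorem: under the rearrangement setup, with `β` a
bijective homomorphism from `R|_X` to `R|_Y` satisfying the neighborhood
conditions, the map `ρ_G(ξ)` (equal to `β(ξ(v))` on `U_ξ` and `ξ(v)` elsewhere)
is a strict homomorphism `G → S` for every `ξ ∈ S(G,R)`; the inversion formula
(via `U'_{ρ_G(ξ)}` and `β⁻¹`) holds, `ρ_G : S(G,R) → S(G,S)` is injective, and
consequently `R ⊑_Γ S` with respect to the class of all finite digraphs. -/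
theorem stmt16 {Z : Type} [Finite Z] [Nonempty Z]
    (A : Z → Z → Prop) (X M Y : Set Z) (β : Z → Z)
    (hXM : X ∩ M = ∅) (hMY : M ∩ Y = ∅)
    (hMNY : ∀ y ∈ Y, M ∩ Nbr A y = ∅)
    (hbij : Set.BijOn β X Y)
    (hβhom : ∀ x ∈ X, ∀ x' ∈ X, A x x' → A (β x) (β x'))
    (hnbh : ∀ x ∈ X, NIn A x \ M ⊆ NIn A (β x) ∧ NOut A x \ M ⊆ NOut A (β x)) :
    (∀ (V : Type) [Finite V] [Nonempty V] (AG : V → V → Prop) (ξ : V → Z),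
      IsStrictHom AG A ξ →
        IsStrictHom AG (SRel A X M β) (rhoMap AG X M β ξ) ∧
        ∀ v : V,
          (v ∈ USet AG Y M (rhoMap AG X M β ξ) →
            ξ v ∈ X ∧ β (ξ v) = rhoMap AG X M β ξ v) ∧
          (v ∉ USet AG Y M (rhoMap AG X M β ξ) →
            ξ v = rhoMap AG X M β ξ v)) ∧
    (∀ (V : Type) [Finite V] [Nonempty V] (AG : V → V → Prop) (ξ ξ' : V → Z),
      IsStrictHom AG A ξ → IsStrictHom AG A ξ' →
        rhoMap AG X M β ξ = rhoMap AG X M β ξ' → ξ = ξ') ∧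
    SqGamma (fun _ _ => True) A (SRel A X M β) :=
  stmt16_general A X M Y β hXM hMY hMNY hbij hβhom hnbh
end

section
/- Assume the rearrangement setup and additionally that X is convex in R and that there is no walk in R starting in M and ending in Y, and none starting in Y and ending in M. Let z₀,…,z_I be a walk in S and K ≡ {i ∈ {1,…,I} : z_{i-1}z_i ∉ A_r}. Then #K ≤ 2, and if K = {k, ℓ} with k < ℓ, then there exist m, n ∈ M and x, y ∈ X with mx and yn proper arcs of R, z_{k-1}z_k = mβ(x) ∈ A_d, and z_{ℓ-1}z_ℓ = β(y)n ∈ A_u. -/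
/-!
Every arc of `S` outside `A_r` enters `β[X] ⊆ Y` from `M` (an arc of `A_d`) or leaves `Y`
towards `M` (an arc of `A_u`), and between two consecutive such arcs the walk runs in `R`.
If the first of two consecutive exceptional arcs ends in `M` (type `A_u`), then either the
second starts in `Y`, giving a walk in `R` from `M` to `Y`, or it goes from `M` into `X`, and
then the walk in `R` from `X` through the vertex in `M` back into `X` contradicts convexity.
Symmetrically the second cannot be of type `A_d`. So consecutive exceptional arcs are of types
`A_d` and then `A_u`, which leaves room for at most two of them.
-/

open Relation Set

theorem Set.ncard_le_two_of_forall_not_lt_lt {α : Type*} [LinearOrder α] {s : Set α}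
    (h : ∀ a ∈ s, ∀ b ∈ s, ∀ c ∈ s, ¬ (a < b ∧ b < c)) : s.ncard ≤ 2 := by
  rcases s.finite_or_infinite with hs | hs
  · by_contra! h2
    obtain ⟨a, ha, b, hb, c, hc, hab, hac, hbc⟩ := (two_lt_ncard hs).mp h2
    rcases hab.lt_or_gt with hab | hab <;> rcases hac.lt_or_gt with hac | hac <;>
      rcases hbc.lt_or_gt with hbc | hbc <;> grind
  · simp [hs.ncard]

theorem Nat.exists_mem_next {K : Set ℕ} {k ℓ : ℕ} (hℓ : ℓ ∈ K) (hkℓ : k < ℓ) :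
    ∃ ℓ' ∈ K, k < ℓ' ∧ ℓ' ≤ ℓ ∧ ∀ j ∈ K, j ∉ Ioo k ℓ' := by
  have hne : (K ∩ Ioi k).Nonempty := ⟨ℓ, hℓ, hkℓ⟩
  obtain ⟨hmem, hlt⟩ := Nat.sInf_mem hne
  refine ⟨_, hmem, hlt, Nat.sInf_le ⟨hℓ, hkℓ⟩, fun j hj ⟨hkj, hjℓ⟩ => ?_⟩
  exact hjℓ.not_ge (Nat.sInf_le ⟨hj, hkj⟩)

/-- The middle one of three elements would satisfy both `P` and `Q`. -/
theorem Nat.ncard_le_two_of_consecutive {K : Set ℕ} (P Q : ℕ → Prop)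
    (hPQ : ∀ k ∈ K, ¬ (P k ∧ Q k))
    (hcons : ∀ k ∈ K, ∀ ℓ ∈ K, k < ℓ → (∀ j ∈ K, j ∉ Ioo k ℓ) → P k ∧ Q ℓ) :
    K.ncard ≤ 2 := by
  refine Set.ncard_le_two_of_forall_not_lt_lt fun a ha b hb c hc ⟨hab, hbc⟩ => ?_
  obtain ⟨b', hb', hab', hb'b, hgap⟩ := Nat.exists_mem_next hb hab
  obtain ⟨c', hc', hb'c', -, hgap'⟩ := Nat.exists_mem_next hc (hb'b.trans_lt hbc)
  exact hPQ b' hb' ⟨(hcons b' hb' c' hc' hb'c' hgap').1, (hcons a ha b' hb' hab' hgap).2⟩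

section Walks

variable {Z : Type} {A : Z → Z → Prop}

def IsWalk (A : Z → Z → Prop) (z : ℕ → Z) (I : ℕ) : Prop :=
  ∀ i < I, A (z i) (z (i + 1))

theorem IsWalk.cons {z : ℕ → Z} {I : ℕ} {a : Z} (hz : IsWalk A z I) (ha : A a (z 0)) :
    IsWalk A (fun i => if i = 0 then a else z (i - 1)) (I + 1) := by
  rintro (_ | i) hi
  · simpa using ha
  · simpa using hz i (by omega)

theorem exists_isWalk_of_reflTransGen {a b : Z} (h : ReflTransGen A a b) :
    ∃ (z : ℕ → Z) (I : ℕ), IsWalk A z I ∧ z 0 = a ∧ z I = b := by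
  induction h using ReflTransGen.head_induction_on with
  | refl => exact ⟨fun _ => b, 0, fun i hi => absurd hi (Nat.not_lt_zero i), rfl, rfl⟩
  | head hac _ ih =>
    obtain ⟨z, I, hz, h0, hI⟩ := ih
    exact ⟨_, I + 1, hz.cons (h0 ▸ hac), rfl, by simpa using hI⟩

theorem exists_isWalk_through {a b c : Z} (hac : ReflTransGen A a c) (hcb : ReflTransGen A c b) :
    ∃ (z : ℕ → Z) (I n : ℕ), n ≤ I ∧ IsWalk A z I ∧ z 0 = a ∧ z n = c ∧ z I = b := by
  induction hac using ReflTransGen.head_induction_on with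
  | refl =>
    obtain ⟨z, I, hz, h0, hI⟩ := exists_isWalk_of_reflTransGen hcb
    exact ⟨z, I, 0, I.zero_le, hz, h0, h0, hI⟩
  | head haa' _ ih =>
    obtain ⟨z, I, n, hnI, hz, h0, hn, hI⟩ := ih
    exact ⟨_, I + 1, n + 1, by omega, hz.cons (h0 ▸ haa'), rfl, by simpa using hn,
      by simpa using hI⟩

theorem mem_of_reflTransGen_of_convex {X : Set Z}
    (hconv : ∀ (z : ℕ → Z) (I : ℕ), IsWalk A z I → z 0 ∈ X → z I ∈ X → ∀ i ≤ I, z i ∈ X)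
    {a b c : Z} (ha : a ∈ X) (hb : b ∈ X) (hac : ReflTransGen A a c)
    (hcb : ReflTransGen A c b) : c ∈ X := by
  obtain ⟨z, I, n, hnI, hz, h0, hn, hI⟩ := exists_isWalk_through hac hcb
  exact hn ▸ hconv z I hz (h0 ▸ ha) (hI ▸ hb) n hnI

theorem not_reflTransGen_of_not_exists_isWalk {S T : Set Z}
    (h : ¬ ∃ (z : ℕ → Z) (I : ℕ), IsWalk A z I ∧ z 0 ∈ S ∧ z I ∈ T)
    {s t : Z} (hs : s ∈ S) (ht : t ∈ T) : ¬ ReflTransGen A s t := fun hst => by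
  obtain ⟨z, I, hz, h0, hI⟩ := exists_isWalk_of_reflTransGen hst
  exact h ⟨z, I, hz, h0 ▸ hs, hI ▸ ht⟩

end Walks

section Rearrangement

variable {Z : Type} {A : Z → Z → Prop} {X M Y : Set Z} {β : Z → Z}

/-- The paper's `K`; step `i` of the walk is the arc `z (i - 1) → z i`, for `1 ≤ i ≤ I`. -/
def nonArSteps (A : Z → Z → Prop) (X M : Set Z) (z : ℕ → Z) (I : ℕ) : Set ℕ :=
  {i | 1 ≤ i ∧ i ≤ I ∧ ¬ ArRel A X M (z (i - 1)) (z i)}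

theorem adRel_or_auRel_of_mem_nonArSteps {z : ℕ → Z} {I i : ℕ}
    (hw : IsWalk (SRel A X M β) z I) (hi : i ∈ nonArSteps A X M z I) :
    AdRel A X M β (z (i - 1)) (z i) ∨ AuRel A X M β (z (i - 1)) (z i) := by
  obtain ⟨h1, hI, hr⟩ := hi
  have hs := hw (i - 1) (by omega)
  rw [Nat.sub_add_cancel h1] at hs
  exact hs.resolve_left hr

theorem reflTransGen_of_forall_notMem_nonArSteps {z : ℕ → Z} {I k ℓ : ℕ} (hkℓ : k < ℓ)
    (hℓ : ℓ ≤ I) (hgap : ∀ j ∈ nonArSteps A X M z I, j ∉ Ioo k ℓ) :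
    ReflTransGen A (z k) (z (ℓ - 1)) := by
  refine ReflTransGen.lift z (fun _ _ h => h) _ _
    (reflTransGen_of_succ_of_le (fun i j => A (z i) (z j)) (fun i ⟨hki, hiℓ⟩ => ?_) (by omega))
  by_contra hA
  exact hgap (i + 1) ⟨by omega, by omega, fun hr => hA hr.1⟩ ⟨by omega, by omega⟩

theorem not_auRel_and_not_adRel_of_consecutive (hXM : Disjoint X M) (hβ : MapsTo β X Y)
    (hconv : ∀ (z : ℕ → Z) (I : ℕ), IsWalk A z I → z 0 ∈ X → z I ∈ X → ∀ i ≤ I, z i ∈ X)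
    (hMY : ∀ m ∈ M, ∀ y ∈ Y, ¬ ReflTransGen A m y)
    (hYM : ∀ y ∈ Y, ∀ m ∈ M, ¬ ReflTransGen A y m)
    {z : ℕ → Z} {I : ℕ} (hw : IsWalk (SRel A X M β) z I) :
    ∀ k ∈ nonArSteps A X M z I, ∀ ℓ ∈ nonArSteps A X M z I, k < ℓ →
      (∀ j ∈ nonArSteps A X M z I, j ∉ Ioo k ℓ) →
      ¬ AuRel A X M β (z (k - 1)) (z k) ∧ ¬ AdRel A X M β (z (ℓ - 1)) (z ℓ) := by
  intro k hk ℓ hℓ hkℓ hgap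
  have hkℓR := reflTransGen_of_forall_notMem_nonArSteps hkℓ hℓ.2.1 hgap
  have hUD : AuRel A X M β (z (k - 1)) (z k) → AdRel A X M β (z (ℓ - 1)) (z ℓ) → False := by
    rintro ⟨hkM, y, hyX, hyk, -⟩ ⟨-, x, hxX, hℓx, -⟩
    exact disjoint_left.mp hXM
      (mem_of_reflTransGen_of_convex hconv hyX hxX (.single hyk) (hkℓR.tail hℓx)) hkM
  constructor
  · intro hU
    rcases adRel_or_auRel_of_mem_nonArSteps hw hℓ with hD | ⟨-, y, hyX, -, hℓy⟩
    · exact hUD hU hD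
    · exact hMY _ hU.1 _ (hℓy ▸ hβ hyX) hkℓR
  · intro hD
    rcases adRel_or_auRel_of_mem_nonArSteps hw hk with ⟨-, x, hxX, -, hkx⟩ | hU
    · exact hYM _ (hkx ▸ hβ hxX) _ hD.1 hkℓR
    · exact hUD hU hD

end Rearrangement

theorem stmt17_general {Z : Type}
    (A : Z → Z → Prop) (X M Y : Set Z) (β : Z → Z)
    (hXM : X ∩ M = ∅)
    (hβ : Set.MapsTo β X Y)
    (hconv : ∀ (z : ℕ → Z) (I : ℕ), (∀ i < I, A (z i) (z (i + 1))) →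
      z 0 ∈ X → z I ∈ X → ∀ i ≤ I, z i ∈ X)
    (hMYwalk : ¬ ∃ (z : ℕ → Z) (I : ℕ),
      (∀ i < I, A (z i) (z (i + 1))) ∧ z 0 ∈ M ∧ z I ∈ Y)
    (hYMwalk : ¬ ∃ (z : ℕ → Z) (I : ℕ),
      (∀ i < I, A (z i) (z (i + 1))) ∧ z 0 ∈ Y ∧ z I ∈ M)
    (z : ℕ → Z) (I : ℕ) (hw : ∀ i < I, SRel A X M β (z i) (z (i + 1))) :
    {i : ℕ | 1 ≤ i ∧ i ≤ I ∧ ¬ ArRel A X M (z (i - 1)) (z i)}.ncard ≤ 2 ∧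
    ∀ k ℓ : ℕ, k < ℓ →
      {i : ℕ | 1 ≤ i ∧ i ≤ I ∧ ¬ ArRel A X M (z (i - 1)) (z i)} = {k, ℓ} →
      ∃ m ∈ M, ∃ n ∈ M, ∃ x ∈ X, ∃ y ∈ X,
        (A m x ∧ m ≠ x) ∧ (A y n ∧ y ≠ n) ∧
        z (k - 1) = m ∧ z k = β x ∧ AdRel A X M β (z (k - 1)) (z k) ∧
        z (ℓ - 1) = β y ∧ z ℓ = n ∧ AuRel A X M β (z (ℓ - 1)) (z ℓ) := by
  have hXM' : Disjoint X M := disjoint_iff_inter_eq_empty.mpr hXM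
  have hcons := not_auRel_and_not_adRel_of_consecutive hXM' hβ hconv
    (fun _ hm _ hy => not_reflTransGen_of_not_exists_isWalk hMYwalk hm hy)
    (fun _ hy _ hm => not_reflTransGen_of_not_exists_isWalk hYMwalk hy hm) hw
  refine ⟨Nat.ncard_le_two_of_consecutive _ _
    (fun i hi ⟨hU, hD⟩ => (adRel_or_auRel_of_mem_nonArSteps hw hi).elim hD hU) hcons, ?_⟩
  intro k ℓ hkℓ hK
  change nonArSteps A X M z I = {k, ℓ} at hK
  have hk : k ∈ nonArSteps A X M z I := by simp [hK]
  have hℓ : ℓ ∈ nonArSteps A X M z I := by simp [hK]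
  obtain ⟨hnotU, hnotD⟩ := hcons k hk ℓ hℓ hkℓ (by simp [hK])
  obtain ⟨hmM, x, hxX, hmx, hkx⟩ := (adRel_or_auRel_of_mem_nonArSteps hw hk).resolve_right hnotU
  obtain ⟨hnM, y, hyX, hyn, hℓy⟩ := (adRel_or_auRel_of_mem_nonArSteps hw hℓ).resolve_left hnotD
  exact ⟨_, hmM, _, hnM, x, hxX, y, hyX, ⟨hmx, (hXM'.ne_of_mem hxX hmM).symm⟩,
    ⟨hyn, hXM'.ne_of_mem hyX hnM⟩, rfl, hkx, ⟨hmM, x, hxX, hmx, hkx⟩, hℓy, rfl,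
    ⟨hnM, y, hyX, hyn, hℓy⟩⟩

/-- Under the rearrangement setup, with `X` convex in `R` and no walk in `R`
from `M` to `Y` or from `Y` to `M`: for every walk `z₀,…,z_I` in `S`, the set
`K = {i : z_{i-1}z_i ∉ A_r}` has at most two elements, and if `K = {k,ℓ}` with
`k < ℓ`, then there are `m, n ∈ M`, `x, y ∈ X` with `mx`, `yn` proper arcs of
`R`, `z_{k-1}z_k = mβ(x) ∈ A_d` and `z_{ℓ-1}z_ℓ = β(y)n ∈ A_u`. -/
theorem stmt17 {Z : Type} [Finite Z] [Nonempty Z]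
    (A : Z → Z → Prop) (X M Y : Set Z) (β : Z → Z)
    (hXM : X ∩ M = ∅) (hMY : M ∩ Y = ∅)
    (hMNY : ∀ y ∈ Y, M ∩ Nbr A y = ∅)
    (hβ : Set.MapsTo β X Y)
    (hconv : ∀ (z : ℕ → Z) (I : ℕ), (∀ i < I, A (z i) (z (i + 1))) →
      z 0 ∈ X → z I ∈ X → ∀ i ≤ I, z i ∈ X)
    (hMYwalk : ¬ ∃ (z : ℕ → Z) (I : ℕ),
      (∀ i < I, A (z i) (z (i + 1))) ∧ z 0 ∈ M ∧ z I ∈ Y)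
    (hYMwalk : ¬ ∃ (z : ℕ → Z) (I : ℕ),
      (∀ i < I, A (z i) (z (i + 1))) ∧ z 0 ∈ Y ∧ z I ∈ M)
    (z : ℕ → Z) (I : ℕ) (hw : ∀ i < I, SRel A X M β (z i) (z (i + 1))) :
    {i : ℕ | 1 ≤ i ∧ i ≤ I ∧ ¬ ArRel A X M (z (i - 1)) (z i)}.ncard ≤ 2 ∧
    ∀ k ℓ : ℕ, k < ℓ →
      {i : ℕ | 1 ≤ i ∧ i ≤ I ∧ ¬ ArRel A X M (z (i - 1)) (z i)} = {k, ℓ} →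
      ∃ m ∈ M, ∃ n ∈ M, ∃ x ∈ X, ∃ y ∈ X,
        (A m x ∧ m ≠ x) ∧ (A y n ∧ y ≠ n) ∧
        z (k - 1) = m ∧ z k = β x ∧ AdRel A X M β (z (k - 1)) (z k) ∧
        z (ℓ - 1) = β y ∧ z ℓ = n ∧ AuRel A X M β (z (ℓ - 1)) (z ℓ) :=
  stmt17_general A X M Y β hXM hβ hconv hMYwalk hYMwalk z I hw
end

section
/- Assume the rearrangement setup with R a finite poset, X convex in R, no walk in R starting in M and ending in Y and none starting in Y and ending in M, β a bijective homomorphism from R|_X to R|_Y, and for all x ∈ X: N^in_R(x) \ M ⊆ N^in_R(β(x)) and N^out_R(x) \ M ⊆ N^out_R(β(x)). Then the transitive hull T of S is a finite poset and R ⊑_Γ T with respect to the class of all finite digraphs. -/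
/-!
Up to composing consecutive arcs of the poset `R`, a path in `S` is an arc of `R`, possibly
preceded by a detour `m → β x` (`m ≤ x`, `m ∈ M`) and possibly followed by a detour `β x → m'`
(`x ≤ m'`, `m' ∈ M`). As `R` has no arcs between `Y` and `M` and `β` is injective and monotone,
these shapes are closed under composition and contain no nontrivial cycle, so the transitive hull
`T` of `S` is a poset.

For the scheme, `ρ(ξ)` applies `β` on each component `Γ_ξ(v)` with `ξ(v) ∈ X` that has a
neighbour mapped into `M`. The neighbourhood conditions make `ρ(ξ)` a homomorphism into `S`. They
also forbid `x ≠ β x` to be adjacent, so adjacent vertices have equal values under `ρ(ξ)` iff under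
`ξ`, and the components are unchanged. Finally `ξ` is recovered from `ρ(ξ)`: the moved vertices are
those sent into `Y` whose component has a neighbour sent into `M`.
-/

section Hull

variable {Z : Type} {A : Z → Z → Prop} {X M Y : Set Z} {β : Z → Z} {a b c : Z}

def ViaM (A : Z → Z → Prop) (M : Set Z) (a b : Z) : Prop :=
  ∃ m ∈ M, A a m ∧ A m b

def DownPath (A : Z → Z → Prop) (X M : Set Z) (β : Z → Z) (a b : Z) : Prop :=
  A a b ∨ ∃ x ∈ X, ViaM A M a x ∧ A (β x) b

def DownUpPath (A : Z → Z → Prop) (X M : Set Z) (β : Z → Z) (a b : Z) : Prop :=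
  DownPath A X M β a b ∨ ∃ x ∈ X, DownPath A X M β a (β x) ∧ ViaM A M x b

theorem not_viaM_of_mem (hMY : ∀ m ∈ M, ∀ y ∈ Y, ¬ A m y) (hb : b ∈ Y) : ¬ ViaM A M a b :=
  fun ⟨m, hm, _, hmb⟩ => hMY m hm b hb hmb

theorem DownUpPath.of_sRel [Std.Refl A] (h : SRel A X M β a b) : DownUpPath A X M β a b := by
  rcases h with ⟨hab, -, -⟩ | ⟨ha, x, hx, hax, rfl⟩ | ⟨hb, x, hx, hxb, rfl⟩
  · exact .inl (.inl hab)
  · exact .inl (.inr ⟨x, hx, ⟨a, ha, refl_of A a, hax⟩, refl_of A _⟩)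
  · exact .inr ⟨x, hx, .inl (refl_of A _), ⟨b, hb, hxb, refl_of A b⟩⟩

section Trans

variable [IsTrans Z A]

theorem DownPath.trans_arc (h : DownPath A X M β a b) (hbc : A b c) : DownPath A X M β a c := by
  rcases h with hab | ⟨x, hx, hax, hxb⟩
  · exact .inl (_root_.trans hab hbc)
  · exact .inr ⟨x, hx, hax, _root_.trans hxb hbc⟩

theorem DownPath.arc_of_arc_mem (hYM : ∀ y ∈ Y, ∀ m ∈ M, ¬ A y m) (hβ : Set.MapsTo β X Y)
    (h : DownPath A X M β a b) (hbc : A b c) (hc : c ∈ M) : A a c := by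
  rcases h with hab | ⟨x, hx, -, hxb⟩
  · exact _root_.trans hab hbc
  · exact (hYM _ (hβ hx) c hc (_root_.trans hxb hbc)).elim

theorem DownPath.trans (hYM : ∀ y ∈ Y, ∀ m ∈ M, ¬ A y m) (hβ : Set.MapsTo β X Y)
    (hab : DownPath A X M β a b) (hbc : DownPath A X M β b c) : DownPath A X M β a c := by
  rcases hbc with hbc | ⟨x, hx, ⟨m, hm, hbm, hmx⟩, hxc⟩
  · exact hab.trans_arc hbc
  · exact .inr ⟨x, hx, ⟨m, hm, hab.arc_of_arc_mem hYM hβ hbm hm, hmx⟩, hxc⟩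

theorem DownPath.antisymm [Std.Antisymm A] (hYM : ∀ y ∈ Y, ∀ m ∈ M, ¬ A y m)
    (hβ : Set.MapsTo β X Y) (hab : DownPath A X M β a b) (hba : DownPath A X M β b a) :
    a = b := by
  rcases hab with hab | ⟨x, hx, ⟨m, hm, ham, -⟩, hxb⟩
  · rcases hba with hba | ⟨x, hx, ⟨m, hm, hbm, -⟩, hxa⟩
    · exact antisymm_of A hab hba
    · exact (hYM _ (hβ hx) m hm (_root_.trans hxa (_root_.trans hab hbm))).elim
  · exact (hYM _ (hβ hx) m hm (_root_.trans hxb (hba.arc_of_arc_mem hYM hβ ham hm))).elim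

/- An `A_u`-arc followed by an `A_d`-arc collapses to an arc between two points of `Y`. -/
theorem ViaM.downPath (hβhom : ∀ x ∈ X, ∀ x' ∈ X, A x x' → A (β x) (β x')) {x : Z}
    (hx : x ∈ X) (hxb : ViaM A M x b) (hbc : DownPath A X M β b c) :
    ViaM A M x c ∨ A (β x) c := by
  obtain ⟨m, hm, hxm, hmb⟩ := hxb
  rcases hbc with hbc | ⟨x', hx', ⟨m', -, hbm', hm'x'⟩, hx'c⟩
  · exact .inl ⟨m, hm, hxm, _root_.trans hmb hbc⟩
  · have hxx' : A x x' := _root_.trans hxm (_root_.trans hmb (_root_.trans hbm' hm'x'))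
    exact .inr (_root_.trans (hβhom x hx x' hx' hxx') hx'c)

theorem ViaM.not_downPath_beta [Std.Antisymm A] (hXM : Disjoint X M)
    (hMY : ∀ m ∈ M, ∀ y ∈ Y, ¬ A m y) (hβ : Set.MapsTo β X Y) (hβinj : Set.InjOn β X)
    (hβhom : ∀ x ∈ X, ∀ x' ∈ X, A x x' → A (β x) (β x')) {x : Z} (hx : x ∈ X)
    (hxb : ViaM A M x b) : ¬ DownPath A X M β b (β x) := by
  obtain ⟨m, hm, hxm, hmb⟩ := hxb
  rintro (hbx | ⟨x', hx', ⟨m', -, hbm', hm'x'⟩, hx'x⟩)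
  · exact hMY m hm _ (hβ hx) (_root_.trans hmb hbx)
  · have hmx' : A m x' := _root_.trans hmb (_root_.trans hbm' hm'x')
    have hxx' : x = x' :=
      hβinj hx hx' (antisymm_of A (hβhom x hx x' hx' (_root_.trans hxm hmx')) hx'x)
    subst hxx'
    exact hXM.ne_of_mem hx hm (antisymm_of A hxm hmx')

theorem DownUpPath.trans (hYM : ∀ y ∈ Y, ∀ m ∈ M, ¬ A y m) (hMY : ∀ m ∈ M, ∀ y ∈ Y, ¬ A m y)
    (hβ : Set.MapsTo β X Y) (hβhom : ∀ x ∈ X, ∀ x' ∈ X, A x x' → A (β x) (β x'))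
    (hab : DownUpPath A X M β a b) (hbc : DownUpPath A X M β b c) : DownUpPath A X M β a c := by
  rcases hab with hab | ⟨x, hx, hax, hxb⟩ <;> rcases hbc with hbc | ⟨x', hx', hbx', hx'c⟩
  · exact .inl (hab.trans hYM hβ hbc)
  · exact .inr ⟨x', hx', hab.trans hYM hβ hbx', hx'c⟩
  · rcases hxb.downPath hβhom hx hbc with hxc | hxc
    · exact .inr ⟨x, hx, hax, hxc⟩
    · exact .inl (hax.trans_arc hxc)
  · rcases hxb.downPath hβhom hx hbx' with hxx' | hxx'
    · exact (not_viaM_of_mem hMY (hβ hx') hxx').elim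
    · exact .inr ⟨x', hx', hax.trans_arc hxx', hx'c⟩

theorem DownUpPath.antisymm [Std.Antisymm A] (hXM : Disjoint X M)
    (hYM : ∀ y ∈ Y, ∀ m ∈ M, ¬ A y m) (hMY : ∀ m ∈ M, ∀ y ∈ Y, ¬ A m y)
    (hβ : Set.MapsTo β X Y) (hβinj : Set.InjOn β X)
    (hβhom : ∀ x ∈ X, ∀ x' ∈ X, A x x' → A (β x) (β x'))
    (hab : DownUpPath A X M β a b) (hba : DownUpPath A X M β b a) : a = b := by
  rcases hab with hab | ⟨x, hx, hax, hxb⟩ <;> rcases hba with hba | ⟨x', hx', hbx', hx'a⟩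
  · exact hab.antisymm hYM hβ hba
  · exact (hx'a.not_downPath_beta hXM hMY hβ hβinj hβhom hx' (hab.trans hYM hβ hbx')).elim
  · exact (hxb.not_downPath_beta hXM hMY hβ hβinj hβhom hx (hba.trans hYM hβ hax)).elim
  · rcases hxb.downPath hβhom hx hbx' with hxx' | hxx'
    · exact (not_viaM_of_mem hMY (hβ hx') hxx').elim
    · exact (hx'a.not_downPath_beta hXM hMY hβ hβinj hβhom hx' (hax.trans_arc hxx')).elim

theorem isPosetRel_transGen_sRel [Std.Refl A] [Std.Antisymm A] (hXM : Disjoint X M)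
    (hYM : ∀ y ∈ Y, ∀ m ∈ M, ¬ A y m) (hMY : ∀ m ∈ M, ∀ y ∈ Y, ¬ A m y)
    (hβ : Set.MapsTo β X Y) (hβinj : Set.InjOn β X)
    (hβhom : ∀ x ∈ X, ∀ x' ∈ X, A x x' → A (β x) (β x')) :
    IsPosetRel (Relation.TransGen (SRel A X M β)) := by
  have hpath {a b : Z} (h : Relation.TransGen (SRel A X M β) a b) : DownUpPath A X M β a b :=
    h.trans_induction_on DownUpPath.of_sRel fun _ _ => DownUpPath.trans hYM hMY hβ hβhom
  have hXM' := Set.disjoint_left.mp hXM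
  exact ⟨fun a => .single (.inl ⟨refl_of A a, fun h => hXM' h.2 h.1, fun h => hXM' h.1 h.2⟩),
    fun a b hab hba => (hpath hab).antisymm hXM hYM hMY hβ hβinj hβhom (hpath hba),
    fun _ _ _ => .trans⟩

end Trans

end Hull

section Components

variable {V W : Type} {AG : V → V → Prop} {ξ ζ : V → W} {u v w : V}

def FiberAdj (AG : V → V → Prop) (ξ : V → W) (p q : V) : Prop :=
  DAdj AG p q ∧ ξ p = ξ q

instance : Std.Symm (FiberAdj AG ξ) :=
  ⟨fun _ _ h => ⟨h.1.symm, h.2.symm⟩⟩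

theorem mem_gammaComp_iff :
    w ∈ GammaComp AG ξ v ↔ Relation.ReflTransGen (FiberAdj AG ξ) v w := by
  constructor
  · rintro ⟨I, z, rfl, rfl, hmem, hadj⟩
    suffices ∀ J ≤ I, Relation.ReflTransGen (FiberAdj AG ξ) (z 0) (z J) from this I le_rfl
    intro J hJ
    induction J with
    | zero => exact .refl
    | succ J ih =>
      exact (ih (by omega)).tail ⟨hadj J hJ, (hmem J (by omega)).trans (hmem (J + 1) hJ).symm⟩
  · intro h
    induction h with
    | refl =>
      exact ⟨0, fun _ => v, rfl, rfl, fun _ _ => rfl, fun _ h => absurd h (Nat.not_lt_zero _)⟩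
    | @tail b c _ hbc ih =>
      obtain ⟨I, z, hz0, hzI, hmem, hadj⟩ := ih
      refine ⟨I + 1, fun i => if i ≤ I then z i else c, by simp [hz0], by simp,
        fun i hi => ?_, fun i hi => ?_⟩
      · dsimp only
        split_ifs with h
        · exact hmem i h
        · show ξ c = ξ v
          rw [← hbc.2, ← hzI]
          exact hmem I le_rfl
      · rcases (show i < I ∨ i = I by omega) with h | rfl
        · simpa [h.le, Nat.succ_le_of_lt h] using hadj i h
        · simpa [hzI] using hbc.1

theorem self_mem_gammaComp : v ∈ GammaComp AG ξ v :=
  mem_gammaComp_iff.mpr .refl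

theorem mem_gammaComp_of_dAdj (h : DAdj AG v w) (hξ : ξ v = ξ w) : w ∈ GammaComp AG ξ v :=
  mem_gammaComp_iff.mpr (.single ⟨h, hξ⟩)

theorem eq_of_mem_gammaComp (hu : u ∈ GammaComp AG ξ v) : ξ u = ξ v := by
  obtain ⟨I, z, -, rfl, hmem, -⟩ := hu
  exact hmem I le_rfl

theorem gammaComp_eq_of_mem (hu : u ∈ GammaComp AG ξ v) : GammaComp AG ξ u = GammaComp AG ξ v := by
  rw [mem_gammaComp_iff] at hu
  ext w
  simp only [mem_gammaComp_iff]
  exact ⟨hu.trans, (symm_of _ hu).trans⟩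

theorem gammaComp_congr (h : ∀ p q, DAdj AG p q → (ζ p = ζ q ↔ ξ p = ξ q)) :
    GammaComp AG ζ v = GammaComp AG ξ v := by
  have hrel : FiberAdj AG ζ = FiberAdj AG ξ := by
    funext p q
    exact propext (and_congr_right (h p q))
  ext w
  rw [mem_gammaComp_iff, mem_gammaComp_iff, hrel]

end Components

section Scheme

variable {Z : Type} {A : Z → Z → Prop} {X M Y : Set Z} {β : Z → Z} {b x x' : Z}

theorem sRel_beta_beta (hβM : ∀ x ∈ X, β x ∉ M)
    (hβhom : ∀ x ∈ X, ∀ x' ∈ X, A x x' → A (β x) (β x')) (hx : x ∈ X) (hx' : x' ∈ X)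
    (h : A x x') : SRel A X M β (β x) (β x') :=
  .inl ⟨hβhom x hx x' hx' h, fun h => hβM x hx h.1, fun h => hβM x' hx' h.2⟩

theorem sRel_beta_left (hβM : ∀ x ∈ X, β x ∉ M) (hout : ∀ x ∈ X, NOut A x \ M ⊆ NOut A (β x))
    (hx : x ∈ X) (h : A x b) (hbx : b ≠ x) : SRel A X M β (β x) b := by
  by_cases hb : b ∈ M
  · exact .inr (.inr ⟨hb, x, hx, h, rfl⟩)
  · exact .inl ⟨(hout x hx ⟨⟨hbx, h⟩, hb⟩).2, fun h => hβM x hx h.1, fun h => hb h.2⟩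

theorem sRel_beta_right (hβM : ∀ x ∈ X, β x ∉ M) (hin : ∀ x ∈ X, NIn A x \ M ⊆ NIn A (β x))
    (hx : x ∈ X) (h : A b x) (hbx : b ≠ x) : SRel A X M β b (β x) := by
  by_cases hb : b ∈ M
  · exact .inr (.inl ⟨hb, x, hx, h, rfl⟩)
  · exact .inl ⟨(hin x hx ⟨⟨hbx, h⟩, hb⟩).2, fun h => hb h.1, fun h => hβM x hx h.2⟩

/- Otherwise the neighbourhood conditions would put `β x` into its own neighbourhood. -/
theorem beta_eq_of_dAdj (hβM : ∀ x ∈ X, β x ∉ M) (hin : ∀ x ∈ X, NIn A x \ M ⊆ NIn A (β x))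
    (hout : ∀ x ∈ X, NOut A x \ M ⊆ NOut A (β x)) (hx : x ∈ X) (h : DAdj A x (β x)) :
    β x = x := by
  by_contra hne
  rcases h with h | h
  · exact (hout x hx ⟨⟨hne, h⟩, hβM x hx⟩).1 rfl
  · exact (hin x hx ⟨⟨hne, h⟩, hβM x hx⟩).1 rfl

variable {V : Type} {AG : V → V → Prop} {ξ ξ' : V → Z} {u v w : V}

def IsMoved (AG : V → V → Prop) (X M : Set Z) (ξ : V → Z) (v : V) : Prop :=
  ξ v ∈ X ∧ ∃ u ∈ GammaComp AG ξ v, ∃ w, DAdj AG u w ∧ ξ w ∈ M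

theorem isMoved_iff_of_mem_gammaComp (hu : u ∈ GammaComp AG ξ v) :
    IsMoved AG X M ξ u ↔ IsMoved AG X M ξ v := by
  rw [IsMoved, IsMoved, eq_of_mem_gammaComp hu, gammaComp_eq_of_mem hu]

open Classical in
/- Unlike `rhoMap`, which moves the vertices of `U_ξ`, this moves every component `Γ_ξ(v)`
meeting `U_ξ`, so that the components of `ξ` are not split. -/
noncomputable def rhoComp (AG : V → V → Prop) (X M : Set Z) (β : Z → Z) (ξ : V → Z) :
    V → Z :=
  fun v => if IsMoved AG X M ξ v then β (ξ v) else ξ v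

theorem rhoComp_of_isMoved (h : IsMoved AG X M ξ v) : rhoComp AG X M β ξ v = β (ξ v) :=
  if_pos h

theorem rhoComp_of_not_isMoved (h : ¬ IsMoved AG X M ξ v) : rhoComp AG X M β ξ v = ξ v :=
  if_neg h

theorem rhoComp_eq_iff_of_dAdj (hξ : IsHom AG A ξ) (hβinj : Set.InjOn β X)
    (hfix : ∀ x ∈ X, DAdj A x (β x) → β x = x) {p q : V} (hpq : DAdj AG p q) :
    rhoComp AG X M β ξ p = rhoComp AG X M β ξ q ↔ ξ p = ξ q := by
  have hR : DAdj A (ξ p) (ξ q) := hpq.imp (fun h => hξ h) (fun h => hξ h)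
  constructor
  · intro h
    by_cases hp : IsMoved AG X M ξ p <;> by_cases hq : IsMoved AG X M ξ q <;>
      simp only [rhoComp, hp, hq, if_true, if_false] at h
    · exact hβinj hp.1 hq.1 h
    · rw [← h] at hR ⊢
      exact (hfix _ hp.1 hR).symm
    · rw [h] at hR ⊢
      exact hfix _ hq.1 hR.symm
    · exact h
  · intro h
    rw [rhoComp, rhoComp, isMoved_iff_of_mem_gammaComp (mem_gammaComp_of_dAdj hpq h), h]

theorem gammaComp_rhoComp (hξ : IsHom AG A ξ) (hβinj : Set.InjOn β X)
    (hfix : ∀ x ∈ X, DAdj A x (β x) → β x = x) :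
    GammaComp AG (rhoComp AG X M β ξ) v = GammaComp AG ξ v :=
  gammaComp_congr fun _ _ => rhoComp_eq_iff_of_dAdj hξ hβinj hfix

theorem isHom_rhoComp (hξ : IsHom AG A ξ) (hβM : ∀ x ∈ X, β x ∉ M)
    (hβhom : ∀ x ∈ X, ∀ x' ∈ X, A x x' → A (β x) (β x'))
    (hin : ∀ x ∈ X, NIn A x \ M ⊆ NIn A (β x)) (hout : ∀ x ∈ X, NOut A x \ M ⊆ NOut A (β x)) :
    IsHom AG (SRel A X M β) (rhoComp AG X M β ξ) := by
  intro v w hvw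
  have hsame (h : ξ v = ξ w) : IsMoved AG X M ξ v ↔ IsMoved AG X M ξ w :=
    (isMoved_iff_of_mem_gammaComp (mem_gammaComp_of_dAdj (.inl hvw) h)).symm
  by_cases hv : IsMoved AG X M ξ v <;> by_cases hw : IsMoved AG X M ξ w <;>
    simp only [rhoComp, hv, hw, if_true, if_false]
  · exact sRel_beta_beta hβM hβhom hv.1 hw.1 (hξ hvw)
  · exact sRel_beta_left hβM hout hv.1 (hξ hvw) fun h => hw ((hsame h.symm).mp hv)
  · exact sRel_beta_right hβM hin hw.1 (hξ hvw) fun h => hv ((hsame h).mpr hw)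
  · exact .inl ⟨hξ hvw, fun h => hw ⟨h.2, w, self_mem_gammaComp, v, .inr hvw, h.1⟩,
      fun h => hv ⟨h.1, v, self_mem_gammaComp, w, .inl hvw, h.2⟩⟩

theorem rhoComp_mem_iff (hXM : Disjoint X M) (hβM : ∀ x ∈ X, β x ∉ M) :
    rhoComp AG X M β ξ w ∈ M ↔ ξ w ∈ M := by
  by_cases hw : IsMoved AG X M ξ w
  · rw [rhoComp_of_isMoved hw]
    exact iff_of_false (hβM _ hw.1) (Set.disjoint_left.mp hXM hw.1)
  · rw [rhoComp_of_not_isMoved hw]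

theorem isMoved_rhoComp_iff (hξ : IsHom AG A ξ) (hXM : Disjoint X M) (hβ : Set.MapsTo β X Y)
    (hβM : ∀ x ∈ X, β x ∉ M) (hβinj : Set.InjOn β X) (hfix : ∀ x ∈ X, DAdj A x (β x) → β x = x)
    (hsep : ∀ y ∈ Y, ∀ m ∈ M, ¬ DAdj A y m) :
    IsMoved AG Y M (rhoComp AG X M β ξ) v ↔ IsMoved AG X M ξ v := by
  rw [IsMoved, IsMoved, gammaComp_rhoComp hξ hβinj hfix]
  simp only [rhoComp_mem_iff hXM hβM]
  refine ⟨fun ⟨hvY, hmeet⟩ => ?_, fun hv => ⟨?_, hv.2⟩⟩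
  · by_contra hv
    rw [rhoComp_of_not_isMoved hv] at hvY
    obtain ⟨u, hu, w, huw, hw⟩ := hmeet
    exact hsep _ (eq_of_mem_gammaComp hu ▸ hvY) _ hw (huw.imp (fun h => hξ h) (fun h => hξ h))
  · rw [rhoComp_of_isMoved hv]
    exact hβ hv.1

theorem rhoComp_injective (hξ : IsHom AG A ξ) (hξ' : IsHom AG A ξ') (hXM : Disjoint X M)
    (hβ : Set.MapsTo β X Y) (hβM : ∀ x ∈ X, β x ∉ M) (hβinj : Set.InjOn β X)
    (hfix : ∀ x ∈ X, DAdj A x (β x) → β x = x) (hsep : ∀ y ∈ Y, ∀ m ∈ M, ¬ DAdj A y m)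
    (h : rhoComp AG X M β ξ = rhoComp AG X M β ξ') : ξ = ξ' := by
  funext v
  have hmoved : IsMoved AG X M ξ v ↔ IsMoved AG X M ξ' v := by
    rw [← isMoved_rhoComp_iff hξ hXM hβ hβM hβinj hfix hsep,
      ← isMoved_rhoComp_iff hξ' hXM hβ hβM hβinj hfix hsep, h]
  have hv := congrFun h v
  by_cases hm : IsMoved AG X M ξ v
  · rw [rhoComp_of_isMoved hm, rhoComp_of_isMoved (hmoved.mp hm)] at hv
    exact hβinj hm.1 (hmoved.mp hm).1 hv
  · rwa [rhoComp_of_not_isMoved hm, rhoComp_of_not_isMoved (mt hmoved.mpr hm)] at hv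

end Scheme

theorem stmt19_general {Z : Type}
    (A : Z → Z → Prop) (hposet : IsPosetRel A)
    (X M Y : Set Z) (β : Z → Z)
    (hXM : X ∩ M = ∅) (hMY : M ∩ Y = ∅)
    (hMNY : ∀ y ∈ Y, M ∩ Nbr A y = ∅)
    (hbij : Set.BijOn β X Y)
    (hβhom : ∀ x ∈ X, ∀ x' ∈ X, A x x' → A (β x) (β x'))
    (hnbh : ∀ x ∈ X, NIn A x \ M ⊆ NIn A (β x) ∧ NOut A x \ M ⊆ NOut A (β x)) :
    IsPosetRel (Relation.TransGen (SRel A X M β)) ∧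
    SqGamma (fun _ _ => True) A (Relation.TransGen (SRel A X M β)) := by
  obtain ⟨hrefl, hanti, htrans⟩ := hposet
  have : Std.Refl A := ⟨hrefl⟩
  have : Std.Antisymm A := ⟨fun _ _ => @hanti _ _⟩
  have : IsTrans Z A := ⟨fun _ _ _ => @htrans _ _ _⟩
  have hXM' : Disjoint X M := Set.disjoint_iff_inter_eq_empty.mpr hXM
  have hMY' := Set.eq_empty_iff_forall_notMem.mp hMY
  have hβM : ∀ x ∈ X, β x ∉ M := fun x hx hm => hMY' _ ⟨hm, hbij.mapsTo hx⟩
  have hsep : ∀ y ∈ Y, ∀ m ∈ M, ¬ DAdj A y m := fun y hy m hm h =>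
    Set.eq_empty_iff_forall_notMem.mp (hMNY y hy) m ⟨hm, fun e => hMY' m ⟨hm, e ▸ hy⟩, h⟩
  have hin x hx := (hnbh x hx).1
  have hout x hx := (hnbh x hx).2
  have hfix : ∀ x ∈ X, DAdj A x (β x) → β x = x := fun _ hx => beta_eq_of_dAdj hβM hin hout hx
  refine ⟨isPosetRel_transGen_sRel hXM' (fun y hy m hm h => hsep y hy m hm (.inl h))
    (fun m hm y hy h => hsep y hy m hm (.inr h)) hbij.mapsTo hbij.injOn hβhom, ?_⟩
  intro V _ _ AG _
  refine ⟨fun ξ => ⟨rhoComp AG X M β ξ.1,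
    fun _ _ h => .single (isHom_rhoComp ξ.2 hβM hβhom hin hout h)⟩, fun ξ ξ' h => ?_,
    fun ξ _ => gammaComp_rhoComp ξ.2 hbij.injOn hfix⟩
  exact Subtype.ext (rhoComp_injective ξ.2 ξ'.2 hXM' hbij.mapsTo hβM hbij.injOn hfix hsep
    (congrArg Subtype.val h))

/-- Under the rearrangement setup with `R` a finite poset, `X` convex, no walk
in `R` between `M` and `Y` in either direction, and `β` a bijective
homomorphism from `R|_X` to `R|_Y` satisfying the neighborhood conditions:
the transitive hull `T` of `S` is a finite poset and `R ⊑_Γ T` with respect to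
the class of all finite digraphs. -/
theorem stmt19 {Z : Type} [Finite Z] [Nonempty Z]
    (A : Z → Z → Prop) (hposet : IsPosetRel A)
    (X M Y : Set Z) (β : Z → Z)
    (hXM : X ∩ M = ∅) (hMY : M ∩ Y = ∅)
    (hMNY : ∀ y ∈ Y, M ∩ Nbr A y = ∅)
    (hconv : ∀ (z : ℕ → Z) (I : ℕ), (∀ i < I, A (z i) (z (i + 1))) →
      z 0 ∈ X → z I ∈ X → ∀ i ≤ I, z i ∈ X)
    (hMYwalk : ¬ ∃ (z : ℕ → Z) (I : ℕ),
      (∀ i < I, A (z i) (z (i + 1))) ∧ z 0 ∈ M ∧ z I ∈ Y)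
    (hYMwalk : ¬ ∃ (z : ℕ → Z) (I : ℕ),
      (∀ i < I, A (z i) (z (i + 1))) ∧ z 0 ∈ Y ∧ z I ∈ M)
    (hbij : Set.BijOn β X Y)
    (hβhom : ∀ x ∈ X, ∀ x' ∈ X, A x x' → A (β x) (β x'))
    (hnbh : ∀ x ∈ X, NIn A x \ M ⊆ NIn A (β x) ∧ NOut A x \ M ⊆ NOut A (β x)) :
    IsPosetRel (Relation.TransGen (SRel A X M β)) ∧
    SqGamma (fun _ _ => True) A (Relation.TransGen (SRel A X M β)) :=
  stmt19_general A hposet X M Y β hXM hMY hMNY hbij hβhom hnbh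
end
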